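/- arXiv:2604.14646 — 2 statements merged into one kernel-verified Lean document; each statement's English description precedes it below -/
import Mathlib

section
/- For a softmax policy π(a) = exp(z_a)/Σ_b exp(z_b) on a finite action set, and any function A on actions, the directional derivative of the entropy H(softmax(z + tA)) at t = 0 equals −Cov_{a∼π}(log π(a), A(a)), where Cov denotes covariance under π. -/
open Real Finset

noncomputable def softmax {α : Type*} [Fintype α] (z : α → ℝ) (a : α) : ℝ :=
  Real.exp (z a) / ∑ b, Real.exp (z b)

noncomputable def entropy {α : Type*} [Fintype α] (p : α → ℝ) : ℝ :=
  -∑ a, p a * Real.log (p a)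

noncomputable def cov {α : Type*} [Fintype α] (p f g : α → ℝ) : ℝ :=
  (∑ a, p a * f a * g a) - (∑ a, p a * f a) * (∑ a, p a * g a)

/-!
Along the line `z + t A` the softmax `π` has derivative `π (A - 𝔼_π A)`, and for any positive
curve of weights the entropy has derivative `-∑ π' (log π + 1)`. The `+ 1` contributes
`-∑ π' = 0` because the weights stay normalised, and what remains,
`-∑ π log π (A - 𝔼_π A)`, is `-Cov_π(log π, A)`.
-/

section

variable {α : Type*} [Fintype α]

theorem sum_exp_pos [Nonempty α] (z : α → ℝ) : 0 < ∑ b, Real.exp (z b) :=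
  Finset.sum_pos (fun b _ => Real.exp_pos (z b)) Finset.univ_nonempty

theorem softmax_pos [Nonempty α] (z : α → ℝ) (a : α) : 0 < softmax z a :=
  div_pos (Real.exp_pos _) (sum_exp_pos z)

theorem sum_softmax [Nonempty α] (z : α → ℝ) : ∑ a, softmax z a = 1 := by
  simp only [softmax, ← Finset.sum_div]
  exact div_self (sum_exp_pos z).ne'

theorem cov_eq_sum_mul_sub_mean (p f g : α → ℝ) :
    cov p f g = ∑ a, p a * f a * (g a - ∑ b, p b * g b) := by
  simp only [cov, mul_sub, Finset.sum_sub_distrib, ← Finset.sum_mul]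

theorem sum_mul_sub_mean {p : α → ℝ} (hp : ∑ a, p a = 1) (g : α → ℝ) :
    ∑ a, p a * (g a - ∑ b, p b * g b) = 0 := by
  simp only [mul_sub, Finset.sum_sub_distrib, ← Finset.sum_mul, hp, one_mul, sub_self]

theorem hasDerivAt_entropy {p : ℝ → α → ℝ} {p' : α → ℝ} {t : ℝ}
    (hp : ∀ a, HasDerivAt (fun s => p s a) (p' a) t) (hpos : ∀ a, 0 < p t a) :
    HasDerivAt (fun s => entropy (p s)) (-∑ a, p' a * (Real.log (p t a) + 1)) t := by
  have hterm : ∀ a, HasDerivAt (fun s => p s a * Real.log (p s a))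
      (p' a * (Real.log (p t a) + 1)) t := fun a => by
    refine ((hp a).fun_mul ((hp a).log (hpos a).ne')).congr_deriv ?_
    field_simp [(hpos a).ne']
  exact (HasDerivAt.fun_sum fun a _ => hterm a).neg

theorem hasDerivAt_softmax_add_mul [Nonempty α] (z A : α → ℝ) (b : α) :
    HasDerivAt (fun t : ℝ => softmax (fun a => z a + t * A a) b)
      (softmax z b * (A b - ∑ a, softmax z a * A a)) 0 := by
  have hexp : ∀ a, HasDerivAt (fun t : ℝ => Real.exp (z a + t * A a)) (Real.exp (z a) * A a) 0 :=
    fun a => by simpa using ((hasDerivAt_mul_const (x := (0:ℝ)) (A a)).const_add (z a)).exp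
  have hZ := HasDerivAt.fun_sum (u := Finset.univ) fun a _ => hexp a
  refine ((hexp b).fun_div hZ (by simpa using (sum_exp_pos z).ne')).congr_deriv ?_
  simp only [softmax, zero_mul, add_zero, div_mul_eq_mul_div, ← Finset.sum_div]
  field_simp [(sum_exp_pos z).ne']

end

/-- The directional derivative of the entropy of `softmax (z + t • A)` at `t = 0`
equals `-Cov_{a ∼ softmax z}(log (softmax z) a, A a)`. -/
theorem stmt0 {α : Type*} [Fintype α] [Nonempty α] (z A : α → ℝ) :
    HasDerivAt (fun t : ℝ => entropy (softmax (fun a => z a + t * A a)))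
      (-(cov (softmax z) (fun a => Real.log (softmax z a)) A)) 0 := by
  have hpos : ∀ a, 0 < softmax (fun a => z a + 0 * A a) a := by simpa using softmax_pos z
  refine (hasDerivAt_entropy (hasDerivAt_softmax_add_mul z A) hpos).congr_deriv ?_
  have hmass : ∑ a, softmax z a * (A a - ∑ b, softmax z b * A b) = 0 :=
    sum_mul_sub_mean (sum_softmax z) A
  simp only [zero_mul, add_zero, mul_add, mul_one, Finset.sum_add_distrib, hmass,
    mul_right_comm _ _ (Real.log _), cov_eq_sum_mul_sub_mean]
end

section
/- Unbiasedness of the Pass@k estimator: if c is a Binomial(n, p) random variable counting correct samples among n i.i.d. attempts with success probability p, and k ≤ n, then E[ C(n−c, k) / C(n, k) ] = (1−p)^k, where C(m,k) denotes the binomial coefficient (taken to be 0 when m < k). Equivalently, E[1 − C(n−c,k)/C(n,k)] = 1 − (1−p)^k. -/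
/-!
Choosing first `c` of `n` attempts and then `k` of the remaining `n - c` is the same as choosing
first the `k` and then `c` of the other `n - k`: `C(n,c) C(n-c,k) = C(n,k) C(n-k,c)`. Hence the
expectation is `(1-p)^k` times the binomial expansion of `(p + (1-p))^(n-k) = 1`.
-/

open Finset

theorem Nat.choose_mul_choose_sub_comm (n a b : ℕ) :
    n.choose a * (n - a).choose b = n.choose b * (n - b).choose a := by
  rcases le_or_gt (a + b) n with h | h
  · have ha := Nat.choose_mul (n := n) (Nat.le_add_right a b)
    have hb := Nat.choose_mul (n := n) (Nat.le_add_left b a)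
    rw [Nat.add_sub_cancel_left] at ha
    rw [Nat.add_sub_cancel, ← Nat.choose_symm_add] at hb
    rw [← ha, ← hb]
  · have vanish : ∀ i j, n < i + j → n.choose i * (n - i).choose j = 0 := fun i j hij => by
      rcases le_or_gt i n with hi | hi
      · simp [Nat.choose_eq_zero_of_lt (show n - i < j by omega)]
      · simp [Nat.choose_eq_zero_of_lt hi]
    rw [vanish a b h, vanish b a (by omega)]

theorem sum_choose_mul_choose_sub_mul_pow {R : Type*} [CommSemiring R] (x y : R) (n k : ℕ) :
    ∑ c ∈ range (n + 1), ((n.choose c * (n - c).choose k : ℕ) : R) * x ^ c * y ^ (n - c)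
      = n.choose k * y ^ k * (x + y) ^ (n - k) := by
  rcases le_or_gt k n with hkn | hkn
  · obtain ⟨m, rfl⟩ := Nat.exists_eq_add_of_le' hkn
    have hsub : range (m + 1) ⊆ range (m + k + 1) := range_subset_range.2 (by omega)
    rw [Nat.add_sub_cancel, add_pow, mul_sum, ← sum_subset hsub]
    · refine sum_congr rfl fun c hc => ?_
      have hc : c ≤ m := Nat.lt_succ_iff.1 (mem_range.1 hc)
      rw [Nat.choose_mul_choose_sub_comm, Nat.add_sub_cancel, show m + k - c = (m - c) + k by omega,
        pow_add]
      push_cast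
      ring
    · intro c hc hc'
      rw [mem_range] at hc hc'
      rw [Nat.choose_eq_zero_of_lt (n := m + k - c) (by omega)]
      simp
  · rw [Nat.choose_eq_zero_of_lt hkn, Nat.cast_zero, zero_mul, zero_mul]
    refine sum_eq_zero fun c _ => ?_
    rw [Nat.choose_eq_zero_of_lt (n := n - c) (by omega)]
    simp

theorem stmt14_general (n k : ℕ) (hkn : k ≤ n) (p : ℝ) :
    ∑ c ∈ Finset.range (n + 1),
        (n.choose c : ℝ) * p ^ c * (1 - p) ^ (n - c) *
          ((n - c).choose k : ℝ) / (n.choose k : ℝ)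
      = (1 - p) ^ k := by
  have hC : (n.choose k : ℝ) ≠ 0 := by exact_mod_cast (Nat.choose_pos hkn).ne'
  calc _ = (∑ c ∈ range (n + 1),
        ((n.choose c * (n - c).choose k : ℕ) : ℝ) * p ^ c * (1 - p) ^ (n - c)) / n.choose k := by
          rw [sum_div]
          refine sum_congr rfl fun c _ => ?_
          push_cast
          ring
    _ = (1 - p) ^ k := by
          rw [sum_choose_mul_choose_sub_mul_pow, add_sub_cancel, one_pow, mul_one,
            mul_div_cancel_left₀ _ hC]

/-- Unbiasedness of the Pass@k estimator: if `c ∼ Binomial(n, p)` then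
`E[C(n−c,k)/C(n,k)] = (1−p)^k` (with `C(m,k) = 0` for `m < k`). -/
theorem stmt14 (n k : ℕ) (hk : 1 ≤ k) (hkn : k ≤ n) (p : ℝ) (hp0 : 0 ≤ p) (hp1 : p ≤ 1) :
    ∑ c ∈ Finset.range (n + 1),
        (n.choose c : ℝ) * p ^ c * (1 - p) ^ (n - c) *
          ((n - c).choose k : ℝ) / (n.choose k : ℝ)
      = (1 - p) ^ k :=
  stmt14_general n k hkn p
end
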